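/- For every r ∈ (0,1), the derivative of ψ at r is strictly negative, where ψ(r) := (1−2r)/(2·√r·(1−r)) − (3/2)·log(1+√r) + (1−r)/(2·(√r + r)) + (3/4)·log(1−r) + 1/2. In particular, ψ is strictly decreasing on (0,1). -/

import Mathlib

/-!
With `s = √r`, the derivative simplifies to
`ψ'(r) = -(1/(2s³) + 1/(8s(1-s)²) + 1/(8s(1+s)²) + 3/(4s(1-s²)))`,
minus a sum of positive terms on `0 < s < 1`; strict monotonicity then follows from the mean
value theorem.
-/

noncomputable def psi (r : ℝ) : ℝ :=
  (1 - 2 * r) / (2 * Real.sqrt r * (1 - r)) - (3 / 2) * Real.log (1 + Real.sqrt r)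
    + (1 - r) / (2 * (Real.sqrt r + r)) + (3 / 4) * Real.log (1 - r) + 1 / 2

open Real Set

noncomputable def psiDeriv (r : ℝ) : ℝ :=
  -(1 / (2 * √r ^ 3) + 1 / (8 * √r * (1 - √r) ^ 2) + 1 / (8 * √r * (1 + √r) ^ 2)
    + 3 / (4 * √r * (1 - r)))

lemma psiDeriv_neg {r : ℝ} (hr : r ∈ Ioo (0 : ℝ) 1) : psiDeriv r < 0 := by
  have hs : 0 < √r := sqrt_pos.mpr hr.1
  have h1r : 0 < 1 - r := sub_pos.mpr hr.2
  unfold psiDeriv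
  exact neg_neg_of_pos (by positivity)

lemma hasDerivAt_psi {r : ℝ} (hr : r ∈ Ioo (0 : ℝ) 1) : HasDerivAt psi (psiDeriv r) r := by
  obtain ⟨hr0, hr1⟩ := hr
  have hs0 : 0 < √r := sqrt_pos.mpr hr0
  have hs1 : √r < 1 := (sqrt_lt' one_pos).2 (by simpa using hr1)
  have hsq : √r ^ 2 = r := sq_sqrt hr0.le
  have hsqrt : HasDerivAt (√·) (1 / (2 * √r)) r := by
    simpa using hasDerivAt_sqrt hr0.ne'
  have hlin : HasDerivAt (fun x : ℝ => 1 - x) (-1) r := (hasDerivAt_id r).const_sub 1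
  have hterm₁ := (((hasDerivAt_id r).const_mul 2).const_sub 1).div
    ((hsqrt.const_mul 2).mul hlin) (by positivity : 2 * √r * (1 - r) ≠ 0)
  have hterm₂ := (hsqrt.const_add 1).log (by positivity)
  have hterm₃ := hlin.div ((hsqrt.add (hasDerivAt_id r)).const_mul 2)
    (by positivity : 2 * (√r + r) ≠ 0)
  have hterm₄ := hlin.log (by linarith)
  refine ((((hterm₁.sub (hterm₂.const_mul (3 / 2))).add hterm₃).add
    (hterm₄.const_mul (3 / 4))).add_const (1 / 2)).congr_deriv ?_
  simp only [psiDeriv, Pi.mul_apply, Pi.add_apply, id]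
  set s := √r
  rw [← hsq]
  have : (1 : ℝ) - s ^ 2 ≠ 0 := by nlinarith
  have : (1 : ℝ) - s ≠ 0 := by linarith
  field_simp
  ring

/-- The derivative of `ψ` is strictly negative on `(0,1)`; in particular `ψ` is
strictly decreasing on `(0,1)`. -/
theorem stmt_10 :
    (∀ r ∈ Set.Ioo (0 : ℝ) 1, deriv psi r < 0) ∧ StrictAntiOn psi (Set.Ioo (0 : ℝ) 1) := by
  have hderiv : ∀ r ∈ Ioo (0 : ℝ) 1, deriv psi r < 0 := fun r hr =>
    (hasDerivAt_psi hr).deriv ▸ psiDeriv_neg hr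
  refine ⟨hderiv, strictAntiOn_of_deriv_neg (convex_Ioo 0 1) ?_ ?_⟩
  · exact HasDerivAt.continuousOn fun r hr => hasDerivAt_psi hr
  · rwa [interior_Ioo]
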